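/- arXiv:2212.07706 — 5 statements merged into one kernel-verified Lean document; each statement's English description precedes it below -/
import Mathlib

section
/- The directed graph G(R,C), whose vertices are the p×q (0,1)-matrices with row sums R and column sums C, with an arc from A to A' whenever A' is obtained from A by a single positive switch, contains no directed cycle. -/
/-- The switching matrix `C_{i,j,k,l}`. -/
def switchMatrix {p q : ℕ} (i j : Fin p) (k l : Fin q) : Matrix (Fin p) (Fin q) ℤ :=
  Matrix.single i k 1 + Matrix.single j l 1
    - Matrix.single i l 1 - Matrix.single j k 1

/-- `A` is a (0,1)-matrix. -/
def IsBinary {p q : ℕ} (A : Matrix (Fin p) (Fin q) ℤ) : Prop :=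
  ∀ r s, A r s = 0 ∨ A r s = 1

/-- `A'` is obtained from the (0,1)-matrix `A` by a positive switch. -/
def PosSwitch {p q : ℕ} (A A' : Matrix (Fin p) (Fin q) ℤ) : Prop :=
  IsBinary A ∧ ∃ (i j : Fin p) (k l : Fin q), i < j ∧ k < l ∧
    A i k = 0 ∧ A j l = 0 ∧ A i l = 1 ∧ A j k = 1 ∧ A' = A + switchMatrix i j k l

/-! A positive switch at `(i,j,k,l)` moves two ones from the positions `(i,l)`, `(j,k)` to
`(i,k)`, `(j,l)`, so it increases the potential `Φ(A) = ∑_{r,s} r · s · A r s` by `(j - i)(l - k) > 0`.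
A directed cycle would return to its start with strictly larger potential. -/

namespace Relation

theorem TransGen.lt_of_forall_lt {α β : Type*} [Preorder β] {r : α → α → Prop} (f : α → β)
    (hf : ∀ a b, r a b → f a < f b) {a b : α} (hab : TransGen r a b) : f a < f b := by
  simpa only [transGen_eq_self] using hab.lift f hf

end Relation

section Potential

variable {p q : ℕ}

def potential : Matrix (Fin p) (Fin q) ℤ →+ ℤ where
  toFun A := ∑ r : Fin p, ∑ s : Fin q, (r : ℤ) * s * A r s
  map_zero' := by simp
  map_add' A B := by simp only [Matrix.add_apply, mul_add, Finset.sum_add_distrib]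

theorem potential_single (i : Fin p) (k : Fin q) :
    potential (Matrix.single i k (1 : ℤ)) = i * k := by
  simp [potential, Matrix.single_apply, ite_and]

theorem potential_switchMatrix (i j : Fin p) (k l : Fin q) :
    potential (switchMatrix i j k l) = ((j : ℤ) - i) * ((l : ℤ) - k) := by
  simp only [switchMatrix, map_sub, map_add, potential_single]
  ring

theorem PosSwitch.potential_lt {A A' : Matrix (Fin p) (Fin q) ℤ} (h : PosSwitch A A') :
    potential A < potential A' := by
  obtain ⟨-, i, j, k, l, hij, hkl, -, -, -, -, rfl⟩ := h
  have hij : (i : ℤ) < j := by exact_mod_cast hij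
  have hkl : (k : ℤ) < l := by exact_mod_cast hkl
  rw [map_add, potential_switchMatrix]
  exact lt_add_of_pos_right _ (mul_pos (sub_pos.2 hij) (sub_pos.2 hkl))

end Potential

theorem stmt1_general {p q : ℕ}
    (A : Matrix (Fin p) (Fin q) ℤ) :
    ¬ Relation.TransGen PosSwitch A A := fun h =>
  lt_irrefl _ (h.lt_of_forall_lt potential fun _ _ => PosSwitch.potential_lt)

/-- the oriented graph `G(R,C)` (vertices: (0,1)-matrices with row sums `R`
and column sums `C`, arcs: positive switches) has no directed cycle. -/
theorem stmt1 {p q : ℕ} (R : Fin p → ℕ) (C : Fin q → ℕ)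
    (A : Matrix (Fin p) (Fin q) ℤ) (hA : IsBinary A)
    (hrow : ∀ i, ∑ k, A i k = (R i : ℤ)) (hcol : ∀ k, ∑ i, A i k = (C k : ℤ)) :
    ¬ Relation.TransGen PosSwitch A A :=
  stmt1_general A
end

section
/- Let R ∈ ℕ^p and C ∈ ℕ^q be non-increasing vectors and let A ∈ M(R,C) be a (0,1)-matrix with row sums R and column sums C. Then A is nested (i.e., in every row and every column, every 1 occurs before every 0) if and only if A contains no 2×2 checkerboard submatrix (i.e., there are no indices i<j, k<l with a_{ik}=a_{jl}=1, a_{il}=a_{jk}=0, nor with a_{ik}=a_{jl}=0, a_{il}=a_{jk}=1). -/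
/-- A (0,1)-matrix is nested if in every row and every column all 1s precede all 0s:
a 0 entry forces all later entries in its row (resp. column) to be 0. -/
def IsNested {p q : ℕ} (A : Matrix (Fin p) (Fin q) ℤ) : Prop :=
  (∀ (i : Fin p) (k l : Fin q), k < l → A i k = 0 → A i l = 0) ∧
  (∀ (k : Fin q) (i j : Fin p), i < j → A i k = 0 → A j k = 0)

/-- `A` has a checkerboard: a 2×2 submatrix equal to `[[1,0],[0,1]]` or `[[0,1],[1,0]]`. -/
def HasCheckerboard {p q : ℕ} (A : Matrix (Fin p) (Fin q) ℤ) : Prop :=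
  ∃ (i j : Fin p) (k l : Fin q), i < j ∧ k < l ∧
    ((A i k = 1 ∧ A j l = 1 ∧ A i l = 0 ∧ A j k = 0) ∨
     (A i k = 0 ∧ A j l = 0 ∧ A i l = 1 ∧ A j k = 1))

/-- for non-increasing row and column sums, a (0,1)-matrix is nested
iff it has no checkerboard. -/
theorem stmt3 {p q : ℕ} (A : Matrix (Fin p) (Fin q) ℤ)
    (hbin : ∀ r s, A r s = 0 ∨ A r s = 1)
    (hR : Antitone (fun i : Fin p => ∑ k, A i k))
    (hC : Antitone (fun k : Fin q => ∑ i, A i k)) :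
    IsNested A ↔ ¬ HasCheckerboard A := by
  constructor
  · rintro ⟨hrow, hcol⟩ ⟨i, j, k, l, hij, hkl, hcb⟩
    rcases hcb with ⟨h1, h2, h3, h4⟩ | ⟨h1, h2, h3, h4⟩
    · have := hcol l i j hij h3; rw [h2] at this; norm_num at this
    · have := hrow i k l hkl h1; rw [h3] at this; norm_num at this
  · intro hnc
    constructor
    · intro i k l hkl h0
      by_contra h1'
      have h1 : A i l = 1 := (hbin i l).resolve_left h1'
      -- find row j with A j k = 1, A j l = 0
      have hsum : ∑ r, A r l ≤ ∑ r, A r k := hC hkl.le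
      have hex : ∃ j, j ≠ i ∧ A j l < A j k := by
        by_contra hno
        push_neg at hno
        have : ∑ r, A r k < ∑ r, A r l := by
          apply Finset.sum_lt_sum (fun r _ => ?_) ⟨i, Finset.mem_univ i, by rw [h0, h1]; norm_num⟩
          by_cases hr : r = i
          · subst hr; rw [h0, h1]; norm_num
          · exact hno r hr
        omega
      obtain ⟨j, hji, hjlt⟩ := hex
      have hjk : A j k = 1 := by rcases hbin j k with h | h <;> rcases hbin j l with h' | h' <;> omega
      have hjl : A j l = 0 := by rcases hbin j k with h | h <;> rcases hbin j l with h' | h' <;> omega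
      rcases lt_or_gt_of_ne hji with hlt | hgt
      · exact hnc ⟨j, i, k, l, hlt, hkl, Or.inl ⟨hjk, h1, hjl, h0⟩⟩
      · exact hnc ⟨i, j, k, l, hgt, hkl, Or.inr ⟨h0, hjl, h1, hjk⟩⟩
    · intro k i j hij h0
      by_contra h1'
      have h1 : A j k = 1 := (hbin j k).resolve_left h1'
      have hsum : ∑ s, A j s ≤ ∑ s, A i s := hR hij.le
      have hex : ∃ l, l ≠ k ∧ A j l < A i l := by
        by_contra hno
        push_neg at hno
        have : ∑ s, A i s < ∑ s, A j s := by
          apply Finset.sum_lt_sum (fun s _ => ?_) ⟨k, Finset.mem_univ k, by rw [h0, h1]; norm_num⟩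
          by_cases hs : s = k
          · subst hs; rw [h0, h1]; norm_num
          · exact hno s hs
        omega
      obtain ⟨l, hlk, hllt⟩ := hex
      have hil : A i l = 1 := by rcases hbin i l with h | h <;> rcases hbin j l with h' | h' <;> omega
      have hjl : A j l = 0 := by rcases hbin i l with h | h <;> rcases hbin j l with h' | h' <;> omega
      rcases lt_or_gt_of_ne hlk with hlt | hgt
      · exact hnc ⟨i, j, l, k, hij, hlt, Or.inl ⟨hil, h1, h0, hjl⟩⟩
      · exact hnc ⟨i, j, k, l, hij, hgt, Or.inr ⟨h0, hjl, hil, h1⟩⟩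
end

section
/- Let A and A' be p×q (0,1)-matrices with equal row sums and equal column sums such that A' is reachable from A by a finite sequence of positive switches. Then there exists a unique matrix T ∈ M_{(p−1)×(q−1)}(ℕ) with nonnegative integer entries such that A' − A = Σ_{i,k} t_{ik} C_{i,i+1,k,k+1}. -/
/-- The unitary switching matrix `C_{i,i+1,k,k+1}`, for `(i,k) ∈ Fin n × Fin m`. -/
def unitarySwitch {n m : ℕ} (i : Fin n) (k : Fin m) : Matrix (Fin (n + 1)) (Fin (m + 1)) ℤ :=
  switchMatrix i.castSucc i.succ k.castSucc k.succ

open Finset Matrix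

theorem switchMatrix_eq_vecMulVec {p q : ℕ} (i j : Fin p) (k l : Fin q) :
    switchMatrix i j k l =
      vecMulVec (Pi.single i 1 - Pi.single j 1) (Pi.single k 1 - Pi.single l 1) := by
  simp only [switchMatrix, single_eq_single_vecMulVec_single, vecMulVec_sub, sub_vecMulVec]
  abel

section Steps

variable {N : ℕ}

def stepVec (i : Fin N) : Fin (N + 1) → ℤ := Pi.single i.castSucc 1 - Pi.single i.succ 1

theorem sum_stepVec_of_le {a b : Fin (N + 1)} (hab : a ≤ b) :
    ∑ i with a ≤ i.castSucc ∧ i.castSucc < b, stepVec i = Pi.single a 1 - Pi.single b 1 := by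
  set e : ℕ → Fin (N + 1) → ℤ := fun r x => if (x : ℕ) = r then 1 else 0
  have he : ∀ x : Fin (N + 1), Pi.single x 1 = e x := fun x => by
    ext y; simp [e, Pi.single_apply, Fin.ext_iff]
  have hIco : (range N).filter (fun r => (a : ℕ) ≤ r ∧ r < b) = Ico (a : ℕ) b := by
    ext r; simp only [mem_filter, mem_range, mem_Ico]; omega
  calc ∑ i with a ≤ i.castSucc ∧ i.castSucc < b, stepVec i
      = ∑ r ∈ (range N).filter (fun r => (a : ℕ) ≤ r ∧ r < b), (e r - e (r + 1)) := by
        rw [sum_filter, sum_filter, ← Fin.sum_univ_eq_sum_range]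
        simp [stepVec, he, Fin.le_def, Fin.lt_def]
    _ = e a - e b := by
        rw [hIco, ← neg_sub, ← sum_Ico_sub (fun r => e r) hab, ← sum_neg_distrib]
        simp
    _ = Pi.single a 1 - Pi.single b 1 := by rw [he, he]

theorem sum_Iic_stepVec (i a : Fin N) :
    ∑ x ∈ Iic a.castSucc, stepVec i x = if i = a then 1 else 0 := by
  simp only [stepVec, Pi.sub_apply, sum_sub_distrib, sum_pi_single', mem_Iic]
  simp only [Fin.le_def, Fin.ext_iff, Fin.val_castSucc, Fin.val_succ]
  split_ifs <;> omega

end Steps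

theorem unitarySwitch_eq_vecMulVec {n m : ℕ} (i : Fin n) (k : Fin m) :
    unitarySwitch i k = vecMulVec (stepVec i) (stepVec k) :=
  switchMatrix_eq_vecMulVec _ _ _ _

theorem switchMatrix_eq_sum_unitarySwitch {n m : ℕ} {i j : Fin (n + 1)} {k l : Fin (m + 1)}
    (hij : i ≤ j) (hkl : k ≤ l) :
    switchMatrix i j k l = ∑ p with i ≤ p.castSucc ∧ p.castSucc < j,
      ∑ q with k ≤ q.castSucc ∧ q.castSucc < l, unitarySwitch p q := by
  ext x y
  simp only [switchMatrix_eq_vecMulVec, unitarySwitch_eq_vecMulVec, ← sum_stepVec_of_le hij,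
    ← sum_stepVec_of_le hkl, vecMulVec_apply, Matrix.sum_apply, Finset.sum_apply, sum_mul_sum]

def cornerSum {p q : ℕ} (a : Fin p) (b : Fin q) : Matrix (Fin p) (Fin q) ℤ →ₗ[ℤ] ℤ :=
  ∑ x ∈ Iic a, ∑ y ∈ Iic b, entryLinearMap ℤ ℤ x y

theorem cornerSum_vecMulVec {p q : ℕ} (a : Fin p) (b : Fin q) (u : Fin p → ℤ) (v : Fin q → ℤ) :
    cornerSum a b (vecMulVec u v) = (∑ x ∈ Iic a, u x) * ∑ y ∈ Iic b, v y := by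
  simp [cornerSum, LinearMap.sum_apply, vecMulVec_apply, sum_mul_sum]

theorem cornerSum_unitarySwitch {n m : ℕ} (i a : Fin n) (k b : Fin m) :
    cornerSum a.castSucc b.castSucc (unitarySwitch i k) = if i = a ∧ k = b then 1 else 0 := by
  rw [unitarySwitch_eq_vecMulVec, cornerSum_vecMulVec, sum_Iic_stepVec, sum_Iic_stepVec,
    ite_zero_mul_ite_zero, one_mul]

theorem cornerSum_sum_smul_unitarySwitch {n m : ℕ} (T : Fin n → Fin m → ℤ) (a : Fin n)
    (b : Fin m) :
    cornerSum a.castSucc b.castSucc (∑ i, ∑ k, T i k • unitarySwitch i k) = T a b := by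
  simp [map_sum, cornerSum_unitarySwitch, ite_and]

theorem sum_smul_unitarySwitch_injective {n m : ℕ} :
    Function.Injective fun T : Fin n → Fin m → ℤ => ∑ i, ∑ k, T i k • unitarySwitch i k := by
  intro T T' h
  funext a b
  rw [← cornerSum_sum_smul_unitarySwitch T a b, ← cornerSum_sum_smul_unitarySwitch T' a b]
  exact congrArg _ h

theorem PosSwitch.exists_sub_eq_sum {n m : ℕ} {B C : Matrix (Fin (n + 1)) (Fin (m + 1)) ℤ}
    (h : PosSwitch B C) :
    ∃ T : Fin n → Fin m → ℕ, C - B = ∑ i, ∑ k, (T i k : ℤ) • unitarySwitch i k := by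
  obtain ⟨-, i, j, k, l, hij, hkl, -, -, -, -, rfl⟩ := h
  refine ⟨fun p q => if (i ≤ p.castSucc ∧ p.castSucc < j) ∧ (k ≤ q.castSucc ∧ q.castSucc < l)
    then 1 else 0, ?_⟩
  rw [add_sub_cancel_left, switchMatrix_eq_sum_unitarySwitch hij.le hkl.le]
  simp [sum_filter, ite_and, ite_smul]

theorem exists_sub_eq_sum_of_reflTransGen {n m : ℕ} {A A' : Matrix (Fin (n + 1)) (Fin (m + 1)) ℤ}
    (h : Relation.ReflTransGen PosSwitch A A') :
    ∃ T : Fin n → Fin m → ℕ, A' - A = ∑ i, ∑ k, (T i k : ℤ) • unitarySwitch i k := by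
  induction h with
  | refl => exact ⟨0, by simp⟩
  | @tail B C _ hBC ih =>
    obtain ⟨T, hT⟩ := ih
    obtain ⟨T', hT'⟩ := hBC.exists_sub_eq_sum
    refine ⟨T' + T, ?_⟩
    rw [← sub_add_sub_cancel C B A, hT', hT]
    simp only [Pi.add_apply, Nat.cast_add, add_smul, sum_add_distrib]

theorem stmt6_general {n m : ℕ} (A A' : Matrix (Fin (n + 1)) (Fin (m + 1)) ℤ)
    (hreach : Relation.ReflTransGen PosSwitch A A') :
    ∃! T : Fin n → Fin m → ℕ,
      A' - A = ∑ i : Fin n, ∑ k : Fin m, (T i k : ℤ) • unitarySwitch i k := by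
  obtain ⟨T, hT⟩ := exists_sub_eq_sum_of_reflTransGen hreach
  refine ⟨T, hT, fun T' hT' => funext₂ fun i k => ?_⟩
  have := congrFun₂ (sum_smul_unitarySwitch_injective (hT'.symm.trans hT)) i k
  exact_mod_cast this

/-- if `A'` is reachable from `A` by a finite sequence of positive switches,
then `A' - A` is a sum of unitary switching matrices with unique nonnegative integer
coefficients. -/
theorem stmt6 {n m : ℕ} (A A' : Matrix (Fin (n + 1)) (Fin (m + 1)) ℤ)
    (hA : IsBinary A) (hA' : IsBinary A')
    (hrow : ∀ i, ∑ k, A i k = ∑ k, A' i k) (hcol : ∀ k, ∑ i, A i k = ∑ i, A' i k)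
    (hreach : Relation.ReflTransGen PosSwitch A A') :
    ∃! T : Fin n → Fin m → ℕ,
      A' - A = ∑ i : Fin n, ∑ k : Fin m, (T i k : ℤ) • unitarySwitch i k :=
  stmt6_general A A' hreach
end

section
/- Let A be a symmetric nonnegative matrix (adjacency matrix of a simple graph) that maximizes the spectral radius λ₁ over the set M(D) of adjacency matrices of simple graphs with fixed degree sequence D, and let X be a nonnegative unit principal eigenvector of A. Then the entries of X are ordered consistently with the degrees: for all vertices i, j, if d_i > d_j then x_i ≥ x_j. -/
/-- The largest eigenvalue of a real symmetric matrix, via its Rayleigh-quotient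
characterization `λ₁(A) = max_{‖x‖₂ = 1} xᵀ A x`. -/
noncomputable def lam1 {n : ℕ} (A : Matrix (Fin n) (Fin n) ℝ) : ℝ :=
  sSup {r | ∃ x : Fin n → ℝ, (∑ u, x u ^ 2) = 1 ∧ r = dotProduct x (A.mulVec x)}

/-- `M(D)`: symmetric (0,1)-matrices with zero diagonal and row sums `D`. -/
def MemMD {n : ℕ} (D : Fin n → ℕ) (A : Matrix (Fin n) (Fin n) ℝ) : Prop :=
  (∀ u v, A u v = 0 ∨ A u v = 1) ∧ A.IsSymm ∧ (∀ u, A u u = 0) ∧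
  (∀ u, ∑ v, A u v = (D u : ℝ))

/-
Suppose `d_u > d_v` but `x_u < x_v`. There is a set `S` of `d_u - d_v` neighbours of `u` that are
not adjacent to `v`; moving the edges `u w` (`w ∈ S`) to `v w` and then exchanging the labels of
`u` and `v` yields a graph in `M(D)`, and this raises the Rayleigh quotient of `X` by
`2 (x_v - x_u) ∑_{w ∈ S} x_w`. Maximality of `λ₁(A)` forces that sum to vanish, so `X` is also a
principal eigenvector of the new graph. But at any `w ∈ S` (where `x_w = 0`) the two eigenvector
equations differ by `x_v - x_u > 0`.
-/

open Finset Matrix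

theorem Matrix.IsSymm.mulVec_eq_smul_of_forall_le {ι : Type*} [Fintype ι] [DecidableEq ι]
    {B : Matrix ι ι ℝ} (hB : B.IsSymm) {μ : ℝ} {x : ι → ℝ}
    (hle : ∀ z, z ⬝ᵥ B *ᵥ z ≤ μ * (z ⬝ᵥ z)) (hx : x ⬝ᵥ B *ᵥ x = μ * (x ⬝ᵥ x)) :
    B *ᵥ x = μ • x := by
  have hpsd : (μ • (1 : Matrix ι ι ℝ) - B).PosSemidef := by
    refine .of_dotProduct_mulVec_nonneg ?_ fun z => ?_
    · simp only [IsHermitian, conjTranspose_eq_transpose_of_trivial, transpose_sub,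
        transpose_smul, transpose_one, hB.eq]
    · simpa [sub_mulVec, smul_mulVec, dotProduct_smul] using hle z
  have := (hpsd.dotProduct_mulVec_zero_iff x).1 (by
    simp [sub_mulVec, smul_mulVec, dotProduct_smul, hx])
  rwa [sub_mulVec, smul_mulVec, one_mulVec, sub_eq_zero, eq_comm] at this

theorem sum_sq_eq_dotProduct {ι : Type*} [Fintype ι] (x : ι → ℝ) : ∑ u, x u ^ 2 = x ⬝ᵥ x := by
  simp [dotProduct, sq]

section Rayleigh

variable {n : ℕ}

theorem bddAbove_rayleigh (A : Matrix (Fin n) (Fin n) ℝ) :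
    BddAbove {r | ∃ x : Fin n → ℝ, (∑ u, x u ^ 2) = 1 ∧ r = x ⬝ᵥ A *ᵥ x} := by
  refine ⟨∑ a, ∑ b, |A a b|, ?_⟩
  rintro _ ⟨x, hx, rfl⟩
  have hx1 : ∀ a, |x a| ≤ 1 := fun a => by
    rw [← sq_le_one_iff_abs_le_one, ← hx]
    exact single_le_sum (fun b _ => sq_nonneg (x b)) (mem_univ a)
  simp only [dotProduct, mulVec, mul_sum]
  refine sum_le_sum fun a _ => sum_le_sum fun b _ => ?_
  calc x a * (A a b * x b) ≤ |x a| * (|A a b| * |x b|) := by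
        rw [← abs_mul, ← abs_mul]; exact le_abs_self _
    _ ≤ 1 * (|A a b| * 1) := by gcongr <;> exact hx1 _
    _ = |A a b| := by ring

theorem dotProduct_mulVec_le_lam1 (A : Matrix (Fin n) (Fin n) ℝ) {x : Fin n → ℝ}
    (hx : ∑ u, x u ^ 2 = 1) : x ⬝ᵥ A *ᵥ x ≤ lam1 A :=
  le_csSup (bddAbove_rayleigh A) ⟨x, hx, rfl⟩

theorem dotProduct_mulVec_le_lam1_mul (A : Matrix (Fin n) (Fin n) ℝ) (z : Fin n → ℝ) :
    z ⬝ᵥ A *ᵥ z ≤ lam1 A * (z ⬝ᵥ z) := by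
  rcases eq_or_ne z 0 with rfl | hz
  · simp
  have hpos : 0 < z ⬝ᵥ z := by
    rw [← sum_sq_eq_dotProduct]
    obtain ⟨a, ha⟩ := Function.ne_iff.1 hz
    exact sum_pos' (fun b _ => sq_nonneg (z b)) ⟨a, mem_univ a, sq_pos_iff.2 ha⟩
  set c := (√(z ⬝ᵥ z))⁻¹
  have hc : c ^ 2 * (z ⬝ᵥ z) = 1 := by
    rw [inv_pow, Real.sq_sqrt hpos.le, inv_mul_cancel₀ hpos.ne']
  have h := dotProduct_mulVec_le_lam1 A (x := c • z) (by
    rw [sum_sq_eq_dotProduct, dotProduct_smul, smul_dotProduct, smul_smul, ← sq, smul_eq_mul, hc])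
  rw [mulVec_smul, dotProduct_smul, smul_dotProduct, smul_smul, ← sq, smul_eq_mul] at h
  calc z ⬝ᵥ A *ᵥ z = c ^ 2 * (z ⬝ᵥ A *ᵥ z) * (z ⬝ᵥ z) := by
        rw [mul_comm (c ^ 2), mul_assoc, hc, mul_one]
    _ ≤ lam1 A * (z ⬝ᵥ z) := by gcongr

theorem lam1_submatrix_equiv (A : Matrix (Fin n) (Fin n) ℝ) (σ : Fin n ≃ Fin n) :
    lam1 (A.submatrix σ σ) = lam1 A := by
  have key : ∀ x : Fin n → ℝ, x ⬝ᵥ A.submatrix σ σ *ᵥ x = x ∘ σ.symm ⬝ᵥ A *ᵥ (x ∘ σ.symm) := by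
    intro x
    rw [submatrix_mulVec_equiv, comp_equiv_symm_dotProduct]
  unfold lam1
  congr 1
  ext r
  constructor
  · rintro ⟨x, hx, rfl⟩
    exact ⟨x ∘ σ.symm, (Equiv.sum_comp σ.symm _).trans hx, key x⟩
  · rintro ⟨x, hx, rfl⟩
    refine ⟨x ∘ σ, (Equiv.sum_comp σ _).trans hx, ?_⟩
    simp [key, Function.comp_assoc]

end Rayleigh

section DegreeSequence

variable {n : ℕ} {D : Fin n → ℕ} {A : Matrix (Fin n) (Fin n) ℝ}

theorem MemMD.submatrix (hA : MemMD D A) (σ : Fin n ≃ Fin n) :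
    MemMD (D ∘ σ) (A.submatrix σ σ) :=
  ⟨fun _ _ => hA.1 _ _, hA.2.1.submatrix σ, fun _ => hA.2.2.1 _,
    fun a => (Equiv.sum_comp σ (A (σ a))).trans (hA.2.2.2 _)⟩

theorem MemMD.card_filter_eq_one (hA : MemMD D A) (u : Fin n) : #{w | A u w = 1} = D u := by
  have h : (#{w | A u w = 1} : ℝ) = ∑ w, A u w := by
    rw [natCast_card_filter]
    refine sum_congr rfl fun w _ => ?_
    rcases hA.1 u w with h | h <;> simp [h]
  exact_mod_cast h.trans (hA.2.2.2 u)

theorem MemMD.exists_finset_card_add_eq (hA : MemMD D A) {u v : Fin n} (huv : D v ≤ D u) :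
    ∃ S : Finset (Fin n), (∀ w ∈ S, A u w = 1 ∧ A v w = 0) ∧ v ∉ S ∧ #S + D v = D u := by
  have hu := hA.card_filter_eq_one u
  have hv := hA.card_filter_eq_one v
  obtain ⟨h01, hsymm, hdiag, -⟩ := hA
  have hvu : A v u = A u v := hsymm.apply u v
  have hcard : D u - D v ≤
      #(({w | A u w = 1} : Finset _).erase v \ ({w | A v w = 1} : Finset _).erase u) := by
    refine le_trans ?_ (le_card_sdiff _ _)
    by_cases h : A u v = 1
    · have hv1 : 1 ≤ D v := hv ▸ card_pos.2 ⟨u, by simp [hvu, h]⟩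
      simp only [card_erase_of_mem (show v ∈ ({w | A u w = 1} : Finset _) by simp [h]),
        card_erase_of_mem (show u ∈ ({w | A v w = 1} : Finset _) by simp [hvu, h]), hu, hv]
      omega
    · simp [h, hvu, hu, hv]
  obtain ⟨S, hS, hcardS⟩ := exists_subset_card_eq hcard
  refine ⟨S, fun w hw => ?_, fun hv => ?_, by omega⟩
  · obtain ⟨⟨-, hAuw⟩, hAvw⟩ : (w ≠ v ∧ A u w = 1) ∧ (w ≠ u → A v w ≠ 1) := by
      simpa using hS hw
    have hwu : w ≠ u := by rintro rfl; simp [hdiag] at hAuw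
    exact ⟨hAuw, (h01 v w).resolve_right (hAvw hwu)⟩
  · simpa using hS hv

theorem lam1_le_of_memMD_comp (hmax : ∀ B, MemMD D B → lam1 B ≤ lam1 A)
    (σ : Equiv.Perm (Fin n)) {C : Matrix (Fin n) (Fin n) ℝ} (hC : MemMD (D ∘ σ) C) :
    lam1 C ≤ lam1 A := by
  have hB : MemMD D (C.submatrix σ.symm σ.symm) := by
    simpa [Function.comp_def] using hC.submatrix σ.symm
  simpa [lam1_submatrix_equiv] using hmax _ hB

end DegreeSequence

section MoveEdges

variable {ι : Type*} [DecidableEq ι]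

/-- Replace every edge `u w` with `w ∈ S` by the edge `v w`, written as the symmetric rank-two
update `A + p qᵀ + q pᵀ` with `p = e_v - e_u` and `q = 𝟙_S`. -/
def moveEdges (A : Matrix ι ι ℝ) (u v : ι) (S : Finset ι) : Matrix ι ι ℝ :=
  A + vecMulVec (Pi.single v 1 - Pi.single u 1) (fun w => if w ∈ S then 1 else 0) +
    vecMulVec (fun w => if w ∈ S then 1 else 0) (Pi.single v 1 - Pi.single u 1)

variable {A : Matrix ι ι ℝ} {u v : ι} {S : Finset ι}

theorem moveEdges_apply (a b : ι) :
    moveEdges A u v S a b = A a b +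
      (Pi.single v 1 - Pi.single u 1 : ι → ℝ) a * (if b ∈ S then 1 else 0) +
      (if a ∈ S then 1 else 0) * (Pi.single v 1 - Pi.single u 1 : ι → ℝ) b :=
  rfl

theorem Matrix.IsSymm.moveEdges (hA : A.IsSymm) : (moveEdges A u v S).IsSymm := by
  simp only [_root_.moveEdges, IsSymm, transpose_add, transpose_vecMulVec, hA.eq]
  abel

variable [Fintype ι]

theorem moveEdges_mulVec (x : ι → ℝ) :
    moveEdges A u v S *ᵥ x = A *ᵥ x + (∑ w ∈ S, x w) • (Pi.single v 1 - Pi.single u 1) +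
      (x v - x u) • fun w => if w ∈ S then 1 else 0 := by
  have hq : (fun w => if w ∈ S then (1 : ℝ) else 0) ⬝ᵥ x = ∑ w ∈ S, x w := by
    simp [dotProduct, ite_mul, sum_ite_mem]
  have hp : (Pi.single v 1 - Pi.single u 1 : ι → ℝ) ⬝ᵥ x = x v - x u := by
    simp [sub_dotProduct]
  simp only [_root_.moveEdges, add_mulVec, vecMulVec_mulVec, hq, hp, op_smul_eq_smul]

theorem dotProduct_moveEdges_mulVec (x : ι → ℝ) :
    x ⬝ᵥ moveEdges A u v S *ᵥ x = x ⬝ᵥ A *ᵥ x + 2 * (x v - x u) * ∑ w ∈ S, x w := by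
  have hq : x ⬝ᵥ (fun w => if w ∈ S then (1 : ℝ) else 0) = ∑ w ∈ S, x w := by
    simp [dotProduct, mul_ite, sum_ite_mem]
  simp only [moveEdges_mulVec, dotProduct_add, dotProduct_smul, dotProduct_sub, hq,
    dotProduct_single, smul_eq_mul, mul_one]
  ring

theorem moveEdges_mulVec_apply_of_mem {w : ι} (hw : w ∈ S) (hwu : w ≠ u) (hwv : w ≠ v)
    (x : ι → ℝ) : (moveEdges A u v S *ᵥ x) w = (A *ᵥ x) w + (x v - x u) := by
  simp [moveEdges_mulVec, hw, hwu, hwv]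

end MoveEdges

theorem memMD_moveEdges {n : ℕ} {D : Fin n → ℕ} {A : Matrix (Fin n) (Fin n) ℝ} (hA : MemMD D A)
    {u v : Fin n} {S : Finset (Fin n)} (huv : u ≠ v) (hS : ∀ w ∈ S, A u w = 1 ∧ A v w = 0)
    (hvS : v ∉ S) (hcard : #S + D v = D u) :
    MemMD (D ∘ Equiv.swap u v) (moveEdges A u v S) := by
  obtain ⟨h01, hsymm, hdiag, hrow⟩ := hA
  have huS : u ∉ S := fun hu => by simpa [hdiag] using (hS u hu).1
  have hS' : ∀ w ∈ S, w ≠ u ∧ w ≠ v ∧ A w u = 1 ∧ A w v = 0 := fun w hw =>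
    ⟨by rintro rfl; exact huS hw, by rintro rfl; exact hvS hw,
      (hsymm.apply w u).symm.trans (hS w hw).1, (hsymm.apply w v).symm.trans (hS w hw).2⟩
  have hsymmC := hsymm.moveEdges (u := u) (v := v) (S := S)
  have hmixed : ∀ a b, a ∈ S → b ∉ S →
      moveEdges A u v S a b = 0 ∨ moveEdges A u v S a b = 1 := by
    intro a b ha hb
    obtain ⟨hau, hav, hAau, hAav⟩ := hS' a ha
    rcases eq_or_ne b u with rfl | hbu
    · simp [moveEdges_apply, ha, hb, hAau, huv]
    rcases eq_or_ne b v with rfl | hbv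
    · simp [moveEdges_apply, ha, hb, hAav, huv.symm]
    · simpa [moveEdges_apply, ha, hb, hbu, hbv] using h01 a b
  refine ⟨fun a b => ?_, hsymmC, fun a => ?_, fun a => ?_⟩
  · by_cases ha : a ∈ S <;> by_cases hb : b ∈ S
    · simpa [moveEdges_apply, ha, hb, (hS' a ha).1, (hS' a ha).2.1, (hS' b hb).1,
        (hS' b hb).2.1] using h01 a b
    · exact hmixed a b ha hb
    · rw [← hsymmC.apply a b]; exact hmixed b a hb ha
    · simpa [moveEdges_apply, ha, hb] using h01 a b
  · by_cases ha : a ∈ S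
    · simp [moveEdges_apply, ha, hdiag, (hS' a ha).1, (hS' a ha).2.1]
    · simp [moveEdges_apply, ha, hdiag]
  · have hsum : ∀ M : Matrix (Fin n) (Fin n) ℝ, ∑ b, M a b = (M *ᵥ 1) a := fun M => by
      simp [mulVec, dotProduct]
    rw [hsum, moveEdges_mulVec, Pi.add_apply, Pi.add_apply, ← hsum, hrow]
    have hcard' : (#S : ℝ) + D v = D u := by exact_mod_cast hcard
    rcases eq_or_ne a u with rfl | hau
    · simp [huv]; linarith
    rcases eq_or_ne a v with rfl | hav
    · simp [huv]; linarith
    · simp [hau, hav, Equiv.swap_apply_of_ne_of_ne]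

/-- if `A` maximizes `λ₁` over `M(D)` and `X` is a nonnegative unit
principal eigenvector of `A`, then `d_i > d_j` implies `x_i ≥ x_j`. -/
theorem stmt12 {n : ℕ} (D : Fin (n + 1) → ℕ) (A : Matrix (Fin (n + 1)) (Fin (n + 1)) ℝ)
    (hA : MemMD D A) (hmax : ∀ B, MemMD D B → lam1 B ≤ lam1 A)
    (X : Fin (n + 1) → ℝ) (hXnn : ∀ u, 0 ≤ X u) (hXunit : (∑ u, X u ^ 2) = 1)
    (hXeig : A.mulVec X = lam1 A • X) :
    ∀ u v : Fin (n + 1), D v < D u → X v ≤ X u := by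
  intro u v hD
  by_contra! hX
  have huv : u ≠ v := by rintro rfl; exact lt_irrefl _ hD
  obtain ⟨S, hS, hvS, hcard⟩ := hA.exists_finset_card_add_eq hD.le
  set C := moveEdges A u v S
  have hC : MemMD (D ∘ Equiv.swap u v) C := memMD_moveEdges hA huv hS hvS hcard
  have hCle : ∀ z, z ⬝ᵥ C *ᵥ z ≤ lam1 A * (z ⬝ᵥ z) := fun z =>
    (dotProduct_mulVec_le_lam1_mul C z).trans <| mul_le_mul_of_nonneg_right
      (lam1_le_of_memMD_comp hmax _ hC) (dotProduct_self_star_nonneg z)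
  have hXX : X ⬝ᵥ X = 1 := (sum_sq_eq_dotProduct X).symm.trans hXunit
  have hXCX : X ⬝ᵥ C *ᵥ X = lam1 A + 2 * (X v - X u) * ∑ w ∈ S, X w := by
    rw [dotProduct_moveEdges_mulVec, hXeig, dotProduct_smul, hXX, smul_eq_mul, mul_one]
  -- otherwise the Rayleigh quotient of `X` for `C` would exceed `λ₁(A)`
  have hsum : ∑ w ∈ S, X w = 0 := by
    have := hCle X
    rw [hXCX, hXX] at this
    nlinarith [sum_nonneg fun w (_ : w ∈ S) => hXnn w]
  obtain ⟨w, hw⟩ : S.Nonempty := card_pos.1 (by omega)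
  have hXw : X w = 0 := (sum_eq_zero_iff_of_nonneg fun w _ => hXnn w).1 hsum w hw
  have hCX : C *ᵥ X = lam1 A • X :=
    hC.2.1.mulVec_eq_smul_of_forall_le hCle (by rw [hXCX, hsum, hXX]; ring)
  have hwu : w ≠ u := by rintro rfl; simpa [hA.2.2.1] using (hS w hw).1
  have hwv : w ≠ v := by rintro rfl; exact hvS hw
  have := congrFun hCX w
  rw [moveEdges_mulVec_apply_of_mem hw hwu hwv, hXeig] at this
  simp only [Pi.smul_apply, smul_eq_mul, hXw, mul_zero, zero_add] at this
  linarith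
end

section
/- Let D be a non-increasing degree sequence and let A, A' ∈ M(D) be adjacency matrices such that A' is obtained from A by a symmetric positive switch at coordinates (i,j,k,l) with i<j, k<l. Then Z_2(A') ≥ Z_2(A), where Z_2 = sqrt(M_2/m), M_2 is the second Zagreb index and m the number of edges (m is invariant under switches). -/
/-- The switching matrix `C_{i,j,k,l}` (square, real entries). -/
def switchMatrixR {n : ℕ} (i j k l : Fin n) : Matrix (Fin n) (Fin n) ℝ :=
  Matrix.single i k 1 + Matrix.single j l 1
    - Matrix.single i l 1 - Matrix.single j k 1

/-- The symmetric switching matrix. -/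
def symSwitchMatrixR {n : ℕ} (i j k l : Fin n) : Matrix (Fin n) (Fin n) ℝ :=
  switchMatrixR i j k l + (switchMatrixR i j k l).transpose

/-- Degree of vertex `u`. -/
def degR {n : ℕ} (A : Matrix (Fin n) (Fin n) ℝ) (u : Fin n) : ℝ := ∑ v, A u v

/-- Number of edges `m` (each edge counted once). -/
def edgeCount {n : ℕ} (A : Matrix (Fin n) (Fin n) ℝ) : ℝ :=
  ∑ u : Fin n, ∑ v : Fin n, if u < v then A u v else 0

/-- Second Zagreb index `M₂ = Σ_{edges uv} d_u d_v`. -/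
def zagreb2R {n : ℕ} (A : Matrix (Fin n) (Fin n) ℝ) : ℝ :=
  ∑ u : Fin n, ∑ v : Fin n, if u < v then A u v * degR A u * degR A v else 0

/-- `Z₂ = sqrt(M₂ / m)`. -/
noncomputable def Z2 {n : ℕ} (A : Matrix (Fin n) (Fin n) ℝ) : ℝ :=
  Real.sqrt (zagreb2R A / edgeCount A)


/-! A switch leaves every row sum unchanged, so it preserves the degrees, and with them fixed
both `m` and `M₂` are linear in the matrix. The increment is therefore the upper-triangular
sum of `C + Cᵀ` weighted by `d_u d_v`; as the four indices are distinct, `C` has zero diagonal,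
so this is the full quadratic form `Σ C_uv d_u d_v = (d_i - d_j)(d_k - d_l)`, which is `≥ 0`
for sorted degrees, and `0` for `d ≡ 1`, which gives the invariance of `m`. -/

section HalfSum

variable {ι M : Type*} [Fintype ι] [LinearOrder ι] [AddCommMonoid M]

theorem sum_ite_lt_add_swap_add_sum_diag (f : ι → ι → M) :
    ∑ u, ∑ v, (if u < v then f u v + f v u else 0) + ∑ u, f u u = ∑ u, ∑ v, f u v := by
  have split : ∀ u v, f u v = (if u < v then f u v else 0) + (if v < u then f u v else 0)
      + (if u = v then f u v else 0) := by
    intro u v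
    rcases lt_trichotomy u v with h | rfl | h
    · simp [h, h.ne, not_lt.mpr h.le]
    · simp
    · simp [h, h.ne', not_lt.mpr h.le]
  have swap : ∑ u, ∑ v, (if v < u then f u v else 0) = ∑ u, ∑ v, (if u < v then f v u else 0) :=
    Finset.sum_comm
  rw [Finset.sum_congr rfl fun u _ ↦ Finset.sum_congr rfl fun v _ ↦ split u v]
  simp only [ite_add_zero, Finset.sum_add_distrib, swap, Finset.sum_ite_eq, Finset.mem_univ,
    if_true]

end HalfSum

section Switch

variable {n : ℕ}

theorem degR_add (A B : Matrix (Fin n) (Fin n) ℝ) (u : Fin n) :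
    degR (A + B) u = degR A u + degR B u :=
  Finset.sum_add_distrib

theorem degR_symSwitchMatrixR (i j k l u : Fin n) : degR (symSwitchMatrixR i j k l) u = 0 := by
  simp only [degR, symSwitchMatrixR, switchMatrixR, Matrix.add_apply, Matrix.sub_apply,
    Matrix.transpose_apply, Matrix.single_apply, ite_and, Finset.sum_add_distrib,
    Finset.sum_sub_distrib]
  simp [Finset.sum_ite_eq]

theorem degR_add_symSwitchMatrixR (A : Matrix (Fin n) (Fin n) ℝ) (i j k l : Fin n) :
    degR (A + symSwitchMatrixR i j k l) = degR A := by
  ext u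
  rw [degR_add, degR_symSwitchMatrixR, add_zero]

theorem switchMatrixR_apply_self {i j k l : Fin n}
    (hik : i ≠ k) (hil : i ≠ l) (hjk : j ≠ k) (hjl : j ≠ l) (u : Fin n) :
    switchMatrixR i j k l u u = 0 := by
  simp only [switchMatrixR, Matrix.add_apply, Matrix.sub_apply, Matrix.single_apply]
  by_cases hi : i = u <;> by_cases hj : j = u <;> by_cases hk : k = u <;> by_cases hl : l = u <;>
    simp_all

theorem sum_switchMatrixR_mul (d : Fin n → ℝ) (i j k l : Fin n) :
    ∑ u, ∑ v, switchMatrixR i j k l u v * d u * d v = (d i - d j) * (d k - d l) := by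
  simp only [switchMatrixR, Matrix.add_apply, Matrix.sub_apply, Matrix.single_apply, ite_and,
    add_mul, sub_mul, ite_mul, zero_mul, one_mul, Finset.sum_add_distrib, Finset.sum_sub_distrib]
  simp only [Finset.sum_ite_irrel, Finset.sum_ite_eq, Finset.mem_univ, ↓reduceIte,
    Finset.sum_const_zero]
  ring

theorem sum_ite_lt_symSwitchMatrixR_mul (d : Fin n → ℝ) {i j k l : Fin n}
    (hik : i ≠ k) (hil : i ≠ l) (hjk : j ≠ k) (hjl : j ≠ l) :
    ∑ u, ∑ v, (if u < v then symSwitchMatrixR i j k l u v * d u * d v else 0)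
      = (d i - d j) * (d k - d l) := by
  rw [← sum_switchMatrixR_mul d i j k l,
    ← sum_ite_lt_add_swap_add_sum_diag (fun u v ↦ switchMatrixR i j k l u v * d u * d v)]
  simp only [switchMatrixR_apply_self hik hil hjk hjl, zero_mul, Finset.sum_const_zero, add_zero,
    symSwitchMatrixR, Matrix.add_apply, Matrix.transpose_apply]
  refine Finset.sum_congr rfl fun u _ ↦ Finset.sum_congr rfl fun v _ ↦ ?_
  split_ifs <;> ring

theorem edgeCount_add (A B : Matrix (Fin n) (Fin n) ℝ) :
    edgeCount (A + B) = edgeCount A + edgeCount B := by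
  simp only [edgeCount, Matrix.add_apply, ite_add_zero, Finset.sum_add_distrib]

theorem edgeCount_add_symSwitchMatrixR (A : Matrix (Fin n) (Fin n) ℝ) {i j k l : Fin n}
    (hik : i ≠ k) (hil : i ≠ l) (hjk : j ≠ k) (hjl : j ≠ l) :
    edgeCount (A + symSwitchMatrixR i j k l) = edgeCount A := by
  have h := sum_ite_lt_symSwitchMatrixR_mul (fun _ ↦ 1) hik hil hjk hjl
  simp only [mul_one, sub_self, mul_zero] at h
  rw [edgeCount_add, add_eq_left]
  exact h

theorem zagreb2R_add_symSwitchMatrixR (A : Matrix (Fin n) (Fin n) ℝ) {i j k l : Fin n}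
    (hik : i ≠ k) (hil : i ≠ l) (hjk : j ≠ k) (hjl : j ≠ l) :
    zagreb2R (A + symSwitchMatrixR i j k l)
      = zagreb2R A + (degR A i - degR A j) * (degR A k - degR A l) := by
  rw [← sum_ite_lt_symSwitchMatrixR_mul (degR A) hik hil hjk hjl]
  simp only [zagreb2R, degR_add_symSwitchMatrixR, Matrix.add_apply, add_mul, ite_add_zero,
    Finset.sum_add_distrib]

theorem edgeCount_nonneg {A : Matrix (Fin n) (Fin n) ℝ} (hA : ∀ u v, 0 ≤ A u v) :
    0 ≤ edgeCount A :=
  Finset.sum_nonneg fun u _ ↦ Finset.sum_nonneg fun v _ ↦ by split_ifs <;> simp [hA]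

end Switch

theorem stmt16_general {n : ℕ} (A A' : Matrix (Fin n) (Fin n) ℝ)
    (hbin : ∀ u v, A u v = 0 ∨ A u v = 1)
    (hmono : Antitone (degR A))
    (i j k l : Fin n) (hij : i < j) (hkl : k < l)
    (hik : i ≠ k) (hil : i ≠ l) (hjk : j ≠ k) (hjl : j ≠ l)
    (hA' : A' = A + symSwitchMatrixR i j k l) :
    Z2 A ≤ Z2 A' := by
  have hm : 0 ≤ edgeCount A :=
    edgeCount_nonneg fun u v ↦ by rcases hbin u v with h | h <;> simp [h]
  have hgain : 0 ≤ (degR A i - degR A j) * (degR A k - degR A l) :=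
    mul_nonneg (sub_nonneg.mpr (hmono hij.le)) (sub_nonneg.mpr (hmono hkl.le))
  rw [Z2, Z2, hA', edgeCount_add_symSwitchMatrixR A hik hil hjk hjl,
    zagreb2R_add_symSwitchMatrixR A hik hil hjk hjl]
  gcongr
  linarith

/-- a symmetric positive switch (degrees sorted non-increasingly)
does not decrease `Z₂`. -/
theorem stmt16 {n : ℕ} (A A' : Matrix (Fin n) (Fin n) ℝ)
    (hbin : ∀ u v, A u v = 0 ∨ A u v = 1) (hsym : A.IsSymm) (hdiag : ∀ u, A u u = 0)
    (hmono : Antitone (degR A))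
    (i j k l : Fin n) (hij : i < j) (hkl : k < l)
    (hik : i ≠ k) (hil : i ≠ l) (hjk : j ≠ k) (hjl : j ≠ l)
    (h1 : A i l = 1) (h2 : A j k = 1) (h3 : A i k = 0) (h4 : A j l = 0)
    (hA' : A' = A + symSwitchMatrixR i j k l) :
    Z2 A ≤ Z2 A' :=
  stmt16_general A A' hbin hmono i j k l hij hkl hik hil hjk hjl hA'
end
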